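/- arXiv:1911.05910 — 2 statements merged into one kernel-verified Lean document; each statement's English description precedes it below -/
import Mathlib

section
/- For every real x ≥ x_G, the set 𝒰(x) is the singleton {q_x}. -/
open scoped ENNReal NNReal Classical

namespace Expansions

/-- Digit sequences over the alphabet `{0,1,…,M}`; index `i : ℕ` represents the
`(i+1)`-st digit `d_{i+1}` of the paper. -/
abbrev Digits (M : ℕ) := ℕ → Fin (M + 1)

/-- `π_q((d_i)) = Σ_{i≥1} d_i / q^i`. -/
noncomputable def piQ (M : ℕ) (q : ℝ) (d : Digits M) : ℝ :=
  ∑' i : ℕ, (d i : ℝ) / q ^ (i + 1)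

/-- `𝒰_q` : the set of real numbers having a unique `q`-expansion. -/
def Uq (M : ℕ) (q : ℝ) : Set ℝ := {x | ∃! d : Digits M, piQ M q d = x}

/-- `𝐔_q` : the set of sequences that are the unique `q`-expansion of their value. -/
def UqSym (M : ℕ) (q : ℝ) : Set (Digits M) :=
  {d | ∀ e : Digits M, piQ M q e = piQ M q d → e = d}

/-- `𝒰(x)` : the set of univoque bases of `x`. -/
def Ubases (M : ℕ) (x : ℝ) : Set ℝ :=
  {q | q ∈ Set.Ioc (1 : ℝ) ((M : ℝ) + 1) ∧ x ∈ Uq M q}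

/-- `q_x = min{M+1, 1+M/x}`. -/
noncomputable def qx (M : ℕ) (x : ℝ) : ℝ := min ((M : ℝ) + 1) (1 + (M : ℝ) / x)

/-- Strict lexicographic order on digit sequences. -/
def lexLt {M : ℕ} (c d : Digits M) : Prop := ∃ n, (∀ i < n, c i = d i) ∧ c n < d n

def lexLe {M : ℕ} (c d : Digits M) : Prop := c = d ∨ lexLt c d

/-- The sequence ends with `0^∞`. -/
def EndsInZero {M : ℕ} (d : Digits M) : Prop := ∃ N, ∀ n ≥ N, d n = 0

/-- `d` is the quasi-greedy `q`-expansion of `x`: the lexicographically largest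
`q`-expansion of `x` not ending with `0^∞`. -/
def IsQuasiGreedy (M : ℕ) (q x : ℝ) (d : Digits M) : Prop :=
  piQ M q d = x ∧ ¬ EndsInZero d ∧
    ∀ e : Digits M, piQ M q e = x → ¬ EndsInZero e → lexLe e d

/-- `Φ_x(q)`: the quasi-greedy `q`-expansion of `x` (junk value if none exists). -/
noncomputable def Phi (M : ℕ) (x q : ℝ) : Digits M :=
  if h : ∃ d : Digits M, IsQuasiGreedy M q x d then h.choose else fun _ => 0

/-- `𝐔(x) = {Φ_x(q) : q ∈ 𝒰(x)}`. -/
def UxSym (M : ℕ) (x : ℝ) : Set (Digits M) := (Phi M x) '' (Ubases M x)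

/-- `ρ((c_i),(d_i)) = (M+1)^{-inf{i ≥ 1 : c_i ≠ d_i}}` (our index `n` represents the
`(n+1)`-st digit, whence the exponent `-(n+1)`); `ρ(c,c) = 0`. -/
noncomputable def rho (M : ℕ) (c d : Digits M) : ℝ :=
  if c = d then 0
  else ((M : ℝ) + 1) ^ (-(((sInf {i | c i ≠ d i} : ℕ) : ℤ) + 1))

/-- Diameter of a set with respect to a distance function, valued in `ℝ≥0∞`. -/
noncomputable def gdiam {X : Type*} (dist : X → X → ℝ) (A : Set X) : ℝ≥0∞ :=
  ⨆ x ∈ A, ⨆ y ∈ A, ENNReal.ofReal (dist x y)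

/-- The `s`-dimensional Hausdorff outer measure with respect to a distance function:
`lim_{δ→0⁺} inf {Σ diam(C n)^s : A ⊆ ⋃ C n, diam (C n) ≤ δ}`. -/
noncomputable def gHMeasure {X : Type*} (dist : X → X → ℝ) (s : ℝ) (A : Set X) : ℝ≥0∞ :=
  ⨆ (δ : ℝ) (_ : 0 < δ),
    ⨅ (C : ℕ → Set X) (_ : A ⊆ ⋃ n, C n)
      (_ : ∀ n, gdiam dist (C n) ≤ ENNReal.ofReal δ),
      ∑' n, gdiam dist (C n) ^ s

/-- Hausdorff dimension with respect to a distance function. -/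
noncomputable def gdimH {X : Type*} (dist : X → X → ℝ) (A : Set X) : ℝ≥0∞ :=
  ⨆ (s : ℝ≥0) (_ : gHMeasure dist (s : ℝ) A = ⊤), (s : ℝ≥0∞)

/-- The generalized golden ratio `q_G`. -/
noncomputable def qG (M : ℕ) : ℝ :=
  if M % 2 = 0 then ((M / 2 : ℕ) : ℝ) + 1
  else (((M / 2 : ℕ) : ℝ) + 1 +
    Real.sqrt (((M / 2 : ℕ) : ℝ) ^ 2 + 6 * ((M / 2 : ℕ) : ℝ) + 5)) / 2

/-- `x_G = M/(q_G - 1)`. -/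
noncomputable def xG (M : ℕ) : ℝ := (M : ℝ) / (qG M - 1)

/-- The Komornik–Loreti constant `q_KL = min 𝒰(1)`. -/
noncomputable def qKL (M : ℕ) : ℝ := sInf (Ubases M 1)

/-- `x_KL = M/(q_KL - 1)`. -/
noncomputable def xKL (M : ℕ) : ℝ := (M : ℝ) / (qKL M - 1)

/-- `X_iso`: the set of `x > 0` such that `𝒰(x)` contains an isolated point. -/
def Xiso (M : ℕ) : Set ℝ :=
  {x | 0 < x ∧ ∃ q ∈ Ubases M x, ∃ ε > 0, Ubases M x ∩ Set.Ioo (q - ε) (q + ε) = {q}}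

/-- The bifurcation set `𝒱 = {q ∈ (1,M+1] : 𝐔_r ≠ 𝐔_q for all r > q}`. -/
def Vset (M : ℕ) : Set ℝ :=
  {q | q ∈ Set.Ioc (1 : ℝ) ((M : ℝ) + 1) ∧
    ∀ r ∈ Set.Ioc (1 : ℝ) ((M : ℝ) + 1), q < r → UqSym M r ≠ UqSym M q}

/-- The Thue–Morse sequence `τ_i` = parity of the binary digit sum of `i`. -/
def tm (i : ℕ) : ℕ := (Nat.digits 2 i).sum % 2

/-!
Since `x ≥ x_G ≥ 1`, we have `q_x = 1 + M / x`, i.e. `x = M / (q_x - 1)` is the largest number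
with a `q_x`-expansion, and `M^∞` is its only expansion. Any base `q ∈ 𝒰(x)` satisfies
`x ≤ M / (q - 1)`, so if `q ≠ q_x` then `q < q_x ≤ q_G` and `0 < x < M / (q - 1)`.

Below `q_G`, however, only `0` and `M / (q - 1)` have unique expansions. Write `S = M / (q - 1)`
and `y_n` for the value of the `n`-th tail of a unique expansion `(d_i)`, so `q y_n = d_n + y_{n+1}`.
If `d_n < M` then `y_{n+1} < 1`, and if `d_n > 0` then `y_{n+1} > S - 1`: otherwise `d_n` could
be changed by one and the remainder expanded greedily. These constraints keep the orbit out of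
`(S - 1, 1)`: there the digit `q y_n - y_{n+1}` would lie in an interval around `M / 2` which, for
`q < q_G`, contains no integer. Hence no digit lies strictly between `0` and `M`, and a digit `M`
is followed by `M`. The expansion is therefore `0^∞` or `0^k M^∞`, and a digit `0` followed by
`M^∞` would violate `y_{n+1} < 1`.
-/

lemma eq_zero_of_forall_pow_mul_abs_le {q a C : ℝ} (hq : 1 < q)
    (h : ∀ n : ℕ, q ^ n * |a| ≤ C) : a = 0 := by
  by_contra ha
  obtain ⟨n, hn⟩ := pow_unbounded_of_one_lt (C / |a|) hq
  rw [div_lt_iff₀ (abs_pos.2 ha)] at hn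
  linarith [h n]

lemma mul_div_sub_one {q : ℝ} (hq : q ≠ 1) (a : ℝ) : q * (a / (q - 1)) = a / (q - 1) + a := by
  field_simp [sub_ne_zero.2 hq]
  ring

section Series

variable {M : ℕ} {q : ℝ}

lemma summable_piQ (hq : 1 < q) (d : Digits M) :
    Summable fun i : ℕ => (d i : ℝ) / q ^ (i + 1) := by
  have hq0 : 0 < q := by linarith
  refine Summable.of_nonneg_of_le (fun i => by positivity) (fun i => ?_)
    ((summable_geometric_of_lt_one (by positivity) (inv_lt_one_of_one_lt₀ hq)).mul_left (M : ℝ))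
  rw [inv_pow, ← div_eq_mul_inv]
  gcongr
  · exact_mod_cast Nat.lt_succ_iff.1 (d i).isLt
  · exact hq.le
  · omega

lemma piQ_cons (hq : 1 < q) (a : Fin (M + 1)) (e : Digits M) :
    piQ M q (Stream'.cons a e) = (a + piQ M q e) / q := by
  have h := (summable_piQ hq (Stream'.cons a e)).tsum_eq_zero_add
  unfold piQ
  rw [h, add_div, ← tsum_div_const]
  congr 1
  · simp [Stream'.cons]
  · refine tsum_congr fun i => ?_
    rw [div_div, ← pow_succ]
    rfl

lemma mul_piQ (hq : 1 < q) (d : Digits M) :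
    q * piQ M q d = d 0 + piQ M q (Stream'.tail d) := by
  have h := piQ_cons hq (d 0) (Stream'.tail d)
  rw [show Stream'.cons (d 0) (Stream'.tail d) = d from Stream'.eta d] at h
  rw [h, mul_div_cancel₀ _ (by linarith)]

lemma piQ_const (hq : 1 < q) (a : Fin (M + 1)) :
    piQ M q (Stream'.const a) = a / (q - 1) := by
  have h := mul_piQ hq (Stream'.const a)
  rw [Stream'.tail_const] at h
  change _ = (a : ℝ) + _ at h
  rw [eq_div_iff (by linarith)]
  linarith

lemma piQ_le_piQ (hq : 1 < q) {d e : Digits M} (h : ∀ i, d i ≤ e i) :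
    piQ M q d ≤ piQ M q e := by
  have hq0 : 0 < q := by linarith
  refine (summable_piQ hq d).tsum_le_tsum (fun i => ?_) (summable_piQ hq e)
  gcongr
  exact h i

lemma piQ_lt_piQ (hq : 1 < q) {d e : Digits M} (h : ∀ i, d i ≤ e i) {i : ℕ}
    (hi : d i < e i) : piQ M q d < piQ M q e := by
  have hq0 : 0 < q := by linarith
  refine (summable_piQ hq d).tsum_lt_tsum (fun i => ?_) ?_ (summable_piQ hq e) (i := i)
  · gcongr
    exact h i
  · gcongr
    exact hi

lemma piQ_nonneg (hq : 1 < q) (d : Digits M) : 0 ≤ piQ M q d := by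
  simpa [piQ_const hq] using
    piQ_le_piQ hq (d := Stream'.const 0) (fun i => Fin.zero_le (d i))

lemma piQ_le_max (hq : 1 < q) (d : Digits M) : piQ M q d ≤ M / (q - 1) := by
  simpa [piQ_const hq] using
    piQ_le_piQ hq (e := Stream'.const (Fin.last M)) (fun i => Fin.le_last (d i))

lemma max_mem_Uq (hq : 1 < q) : (M : ℝ) / (q - 1) ∈ Uq M q := by
  refine ⟨Stream'.const (Fin.last M), by simp [piQ_const hq], fun e he => ?_⟩
  by_contra hne
  obtain ⟨i, hi⟩ := Function.ne_iff.1 hne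
  have := piQ_lt_piQ hq (e := Stream'.const (Fin.last M)) (fun i => Fin.le_last (e i))
    (Fin.lt_last_iff_ne_last.2 hi)
  simp [piQ_const hq, he] at this

end Series

section Greedy

variable (M : ℕ) (q : ℝ)

noncomputable def greedyDigit (t : ℝ) : Fin (M + 1) :=
  ⟨min M ⌊q * t⌋₊, Nat.lt_succ_of_le (min_le_left _ _)⟩

noncomputable def greedyStep (t : ℝ) : ℝ := q * t - greedyDigit M q t

noncomputable def greedyExpansion (t : ℝ) : Digits M :=
  Stream'.map (greedyDigit M q) (Stream'.iterate (greedyStep M q) t)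

variable {M q}

lemma greedyExpansion_eq_cons (t : ℝ) :
    greedyExpansion M q t =
      Stream'.cons (greedyDigit M q t) (greedyExpansion M q (greedyStep M q t)) := by
  rw [greedyExpansion, Stream'.iterate_eq, Stream'.map_cons]
  rfl

lemma greedyStep_mem_Icc (hq : 1 < q) (hqM : q ≤ M + 1) {t : ℝ}
    (ht : t ∈ Set.Icc 0 ((M : ℝ) / (q - 1))) :
    greedyStep M q t ∈ Set.Icc 0 ((M : ℝ) / (q - 1)) := by
  obtain ⟨ht0, htS⟩ := ht
  have hS : (M : ℝ) / (q - 1) * (q - 1) = M := div_mul_cancel₀ _ (by linarith)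
  have hqt : 0 ≤ q * t := by positivity
  simp only [greedyStep, greedyDigit, Nat.cast_min]
  rcases le_total (⌊q * t⌋₊ : ℝ) M with h | h
  · rw [min_eq_right h]
    have := Nat.lt_floor_add_one (q * t)
    constructor <;> nlinarith [Nat.floor_le hqt]
  · rw [min_eq_left h]
    constructor <;> nlinarith [Nat.floor_le hqt]

lemma piQ_greedyExpansion (hq : 1 < q) (hqM : q ≤ M + 1) {t : ℝ}
    (ht : t ∈ Set.Icc 0 ((M : ℝ) / (q - 1))) : piQ M q (greedyExpansion M q t) = t := by
  suffices h : ∀ n : ℕ, ∀ t ∈ Set.Icc 0 ((M : ℝ) / (q - 1)),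
      q ^ n * |t - piQ M q (greedyExpansion M q t)| ≤ M / (q - 1) by
    linarith [eq_zero_of_forall_pow_mul_abs_le hq (h · t ht)]
  intro n
  induction n with
  | zero =>
    intro t ⟨ht0, htS⟩
    rw [pow_zero, one_mul, abs_sub_le_iff]
    constructor <;>
      linarith [piQ_nonneg hq (greedyExpansion M q t), piQ_le_max hq (greedyExpansion M q t)]
  | succ n ih =>
    intro t ht
    have hstep : t - piQ M q (greedyExpansion M q t) =
        (greedyStep M q t - piQ M q (greedyExpansion M q (greedyStep M q t))) / q := by
      rw [greedyExpansion_eq_cons, piQ_cons hq, greedyStep]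
      field_simp
      ring
    rw [hstep, abs_div, abs_of_pos (by linarith : (0 : ℝ) < q), pow_succ, mul_assoc,
      mul_div_cancel₀ _ (by linarith)]
    exact ih _ (greedyStep_mem_Icc hq hqM ht)

end Greedy

section Unique

variable {M : ℕ} {q : ℝ} {d : Digits M}

lemma tail_mem_UqSym (hq : 1 < q) (hd : d ∈ UqSym M q) : Stream'.tail d ∈ UqSym M q := by
  intro e he
  have hcons : Stream'.cons (d 0) e = d := by
    refine hd _ ?_
    rw [piQ_cons hq, he, ← mul_piQ hq, mul_div_cancel_left₀ _ (by linarith)]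
  rw [← hcons]
  rfl

lemma drop_mem_UqSym (hq : 1 < q) (hd : d ∈ UqSym M q) (n : ℕ) :
    Stream'.drop n d ∈ UqSym M q := by
  induction n generalizing d with
  | zero => exact hd
  | succ n ih => exact ih (tail_mem_UqSym hq hd)

/-- An admissible first digit `a` can be completed greedily to an expansion of `piQ d`. -/
lemma eq_head_of_mem_UqSym (hq : 1 < q) (hqM : q ≤ M + 1) (hd : d ∈ UqSym M q)
    {a : Fin (M + 1)} (ha : q * piQ M q d - a ∈ Set.Icc 0 ((M : ℝ) / (q - 1))) : a = d 0 := by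
  have hcons : Stream'.cons a (greedyExpansion M q (q * piQ M q d - a)) = d := by
    refine hd _ ?_
    rw [piQ_cons hq, piQ_greedyExpansion hq hqM ha]
    field_simp
    ring
  rw [← hcons]
  rfl

lemma piQ_tail_lt_one (hq : 1 < q) (hqM : q ≤ M + 1) (hd : d ∈ UqSym M q)
    (h : (d 0 : ℕ) < M) : piQ M q (Stream'.tail d) < 1 := by
  by_contra! h1
  have := eq_head_of_mem_UqSym hq hqM hd (a := ⟨d 0 + 1, by omega⟩) (by
    rw [mul_piQ hq]
    push_cast
    constructor <;> linarith [piQ_le_max hq (Stream'.tail d)])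
  simp [Fin.ext_iff] at this

lemma sub_one_lt_piQ_tail (hq : 1 < q) (hqM : q ≤ M + 1) (hd : d ∈ UqSym M q)
    (h : 0 < (d 0 : ℕ)) : (M : ℝ) / (q - 1) - 1 < piQ M q (Stream'.tail d) := by
  by_contra! h1
  have := eq_head_of_mem_UqSym hq hqM hd (a := ⟨d 0 - 1, by omega⟩) (by
    rw [mul_piQ hq, Nat.cast_sub h]
    push_cast
    constructor <;> linarith [piQ_nonneg hq (Stream'.tail d)])
  simp [Fin.ext_iff] at this
  omega

end Unique

section GoldenRatio

variable {M : ℕ} {q : ℝ}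

lemma qG_two_mul (k : ℕ) : qG (2 * k) = k + 1 := by
  simp [qG]

lemma qG_two_mul_add_one (k : ℕ) :
    qG (2 * k + 1) = (k + 1 + √((k : ℝ) ^ 2 + 6 * k + 5)) / 2 := by
  simp [qG, Nat.add_mod, show (2 * k + 1) / 2 = k by omega]

lemma sq_lt_of_lt_qG_two_mul_add_one {k : ℕ} (hq : 0 < q) (h : q < qG (2 * k + 1)) :
    q ^ 2 < (k + 1) * (q + 1) := by
  rw [qG_two_mul_add_one] at h
  set s := √((k : ℝ) ^ 2 + 6 * k + 5)
  have hs : s ^ 2 = (k : ℝ) ^ 2 + 6 * k + 5 := Real.sq_sqrt (by positivity)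
  have hks : (k : ℝ) + 1 ≤ s := Real.le_sqrt_of_sq_le (by nlinarith)
  nlinarith [sq_lt_sq' (by linarith : -s < 2 * q - k - 1) (by linarith : 2 * q - k - 1 < s)]

lemma one_lt_qG (hM : 0 < M) : 1 < qG M := by
  obtain ⟨k, rfl | rfl⟩ := Nat.even_or_odd' M
  · rw [qG_two_mul]
    have : (1 : ℝ) ≤ k := by exact_mod_cast (by omega : 1 ≤ k)
    linarith
  · rw [qG_two_mul_add_one]
    have : (1 : ℝ) < √((k : ℝ) ^ 2 + 6 * k + 5) :=
      Real.lt_sqrt_of_sq_lt (by nlinarith [(Nat.cast_nonneg k : (0 : ℝ) ≤ k)])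
    linarith [(Nat.cast_nonneg k : (0 : ℝ) ≤ k)]

lemma qG_le (M : ℕ) : qG M ≤ M + 1 := by
  obtain ⟨k, rfl | rfl⟩ := Nat.even_or_odd' M
  · rw [qG_two_mul]
    push_cast
    linarith [(Nat.cast_nonneg k : (0 : ℝ) ≤ k)]
  · rw [qG_two_mul_add_one]
    have : √((k : ℝ) ^ 2 + 6 * k + 5) ≤ 3 * k + 3 :=
      Real.sqrt_le_iff.2 ⟨by positivity, by nlinarith⟩
    push_cast
    linarith

lemma sq_lt_of_lt_qG (hq : 1 < q) (hqG : q < qG M) : q ^ 2 < M * q + 1 := by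
  obtain ⟨k, rfl | rfl⟩ := Nat.even_or_odd' M
  · rw [qG_two_mul] at hqG
    push_cast
    nlinarith
  · have := sq_lt_of_lt_qG_two_mul_add_one (by linarith) hqG
    push_cast
    nlinarith [(Nat.cast_nonneg k : (0 : ℝ) ≤ k)]

/-- The interval is centred at `M / 2`, and below `q_G` it is too short to contain an integer. -/
lemma natCast_notMem_Ioo_of_lt_qG (hq : 1 < q) (hqG : q < qG M) (c : ℕ) :
    (c : ℝ) ∉ Set.Ioo ((M : ℝ) / (q - 1) + M - q - 1) (q + 1 - M / (q - 1)) := by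
  set S := (M : ℝ) / (q - 1)
  rintro ⟨hlo, hhi⟩
  have hS : S * (q - 1) = M := div_mul_cancel₀ _ (by linarith)
  obtain ⟨k, rfl | rfl⟩ := Nat.even_or_odd' M
  · rw [qG_two_mul] at hqG
    push_cast at hS hlo
    have : (2 : ℝ) < S := by nlinarith
    linarith
  · have hq2 := sq_lt_of_lt_qG_two_mul_add_one (by linarith) hqG
    push_cast at hS hlo
    have hSq : q - k ≤ S := by nlinarith
    have hkc : (k : ℝ) < c := by linarith
    have hck : (c : ℝ) < k + 1 := by linarith
    norm_cast at hkc hck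
    omega

lemma pos_of_sq_lt (hq : 1 < q) (hq2 : q ^ 2 < M * q + 1) : 0 < M := by
  by_contra! hM
  rw [Nat.le_zero.1 hM, Nat.cast_zero] at hq2
  nlinarith

lemma le_add_one_of_sq_lt (hq : 1 < q) (hq2 : q ^ 2 < M * q + 1) : q ≤ M + 1 := by
  nlinarith

lemma add_one_lt_of_sq_lt (hq : 1 < q) (hq2 : q ^ 2 < M * q + 1) :
    q + 1 < M / (q - 1) + M := by
  rw [← sub_lt_iff_lt_add, lt_div_iff₀ (by linarith)]
  nlinarith

end GoldenRatio

section BelowGoldenRatio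

variable {M : ℕ} {q : ℝ} {d : Digits M}

lemma head_pos_of_sub_one_lt_piQ (hq : 1 < q) (hq2 : q ^ 2 < M * q + 1) (hd : d ∈ UqSym M q)
    (h : (M : ℝ) / (q - 1) - 1 < piQ M q d) : 0 < (d 0 : ℕ) := by
  have hS := add_one_lt_of_sq_lt hq hq2
  have hqS := mul_div_sub_one hq.ne' (M : ℝ)
  by_contra! h0
  have h1 := piQ_tail_lt_one hq (le_add_one_of_sq_lt hq hq2) hd
    (by linarith [pos_of_sq_lt hq hq2])
  have h2 := mul_piQ hq d
  rw [Nat.le_zero.1 h0, Nat.cast_zero, zero_add] at h2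
  nlinarith [mul_lt_mul_of_pos_left h (by linarith : (0 : ℝ) < q)]

lemma head_lt_of_piQ_lt_one (hq : 1 < q) (hq2 : q ^ 2 < M * q + 1) (hd : d ∈ UqSym M q)
    (h : piQ M q d < 1) : (d 0 : ℕ) < M := by
  have hS := add_one_lt_of_sq_lt hq hq2
  by_contra! hM
  have hdM : (d 0 : ℕ) = M := le_antisymm (Nat.lt_succ_iff.1 (d 0).isLt) hM
  have h1 := sub_one_lt_piQ_tail hq (le_add_one_of_sq_lt hq hq2) hd
    (by rw [hdM]; exact pos_of_sq_lt hq hq2)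
  have h2 := mul_piQ hq d
  rw [hdM] at h2
  nlinarith [mul_lt_mul_of_pos_left h (by linarith : (0 : ℝ) < q)]

lemma piQ_notMem_Ioo (hq : 1 < q) (hqG : q < qG M) (hd : d ∈ UqSym M q) :
    piQ M q d ∉ Set.Ioo ((M : ℝ) / (q - 1) - 1) 1 := by
  have hq2 := sq_lt_of_lt_qG hq hqG
  have hqM := le_add_one_of_sq_lt hq hq2
  have hqS := mul_div_sub_one hq.ne' (M : ℝ)
  rintro ⟨hlo, hhi⟩
  have h1 := piQ_tail_lt_one hq hqM hd (head_lt_of_piQ_lt_one hq hq2 hd hhi)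
  have h2 := sub_one_lt_piQ_tail hq hqM hd (head_pos_of_sub_one_lt_piQ hq hq2 hd hlo)
  have h3 := mul_piQ hq d
  -- `d 0 = q y - y'` with `y` and `y'` both in the interval
  refine natCast_notMem_Ioo_of_lt_qG hq hqG (d 0) ⟨?_, ?_⟩ <;> nlinarith

lemma head_eq_zero_or_eq_last (hq : 1 < q) (hqG : q < qG M) (hd : d ∈ UqSym M q) :
    d 0 = 0 ∨ d 0 = Fin.last M := by
  have hqM := le_add_one_of_sq_lt hq (sq_lt_of_lt_qG hq hqG)
  by_contra! h
  exact piQ_notMem_Ioo hq hqG (tail_mem_UqSym hq hd)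
    ⟨sub_one_lt_piQ_tail hq hqM hd (Fin.pos_iff_ne_zero.2 h.1),
      piQ_tail_lt_one hq hqM hd (Fin.val_lt_last h.2)⟩

lemma eq_const_last_of_head_eq_last (hq : 1 < q) (hqG : q < qG M) (hd : d ∈ UqSym M q)
    (h : d 0 = Fin.last M) : d = Stream'.const (Fin.last M) := by
  have hq2 := sq_lt_of_lt_qG hq hqG
  funext j
  induction j generalizing d with
  | zero => exact h
  | succ j ih =>
    have ht := tail_mem_UqSym hq hd
    have hpos : 0 < ((Stream'.tail d 0 : Fin (M + 1)) : ℕ) :=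
      head_pos_of_sub_one_lt_piQ hq hq2 ht (sub_one_lt_piQ_tail hq
        (le_add_one_of_sq_lt hq hq2) hd (by simpa [h] using pos_of_sq_lt hq hq2))
    exact ih ht ((head_eq_zero_or_eq_last hq hqG ht).resolve_left (Fin.pos_iff_ne_zero.1 hpos))

lemma piQ_eq_of_piQ_drop_eq (hq : 1 < q) (hqM : q < M + 1) (hd : d ∈ UqSym M q) (n : ℕ)
    (h : piQ M q (Stream'.drop n d) = M / (q - 1)) : piQ M q d = M / (q - 1) := by
  induction n generalizing d with
  | zero => exact h
  | succ n ih =>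
    have htail := ih (tail_mem_UqSym hq hd) h
    have hS1 : 1 < (M : ℝ) / (q - 1) := by rw [lt_div_iff₀ (by linarith)]; linarith
    have hd0 : ((d 0 : ℕ) : ℝ) = M := by
      by_contra hne
      have := piQ_tail_lt_one hq hqM.le hd
        (lt_of_le_of_ne (Nat.lt_succ_iff.1 (d 0).isLt) (by exact_mod_cast hne))
      linarith
    have h2 := mul_piQ hq d
    rw [hd0, htail, add_comm, ← mul_div_sub_one hq.ne'] at h2
    exact mul_left_cancel₀ (by linarith) h2

theorem Uq_subset_of_lt_qG (hq : 1 < q) (hqG : q < qG M) :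
    Uq M q ⊆ {0, (M : ℝ) / (q - 1)} := by
  rintro x ⟨d, rfl, hd⟩
  by_cases hzero : ∀ n, d n = 0
  · left
    simpa [piQ_const hq] using congrArg (piQ M q) (funext hzero : d = Stream'.const 0)
  · right
    obtain ⟨n, hn⟩ := not_forall.1 hzero
    have hdrop := drop_mem_UqSym hq hd n
    have hlast := (head_eq_zero_or_eq_last hq hqG hdrop).resolve_left
      (by simpa [Stream'.drop, Stream'.get] using hn)
    refine piQ_eq_of_piQ_drop_eq hq (lt_of_lt_of_le hqG (qG_le M)) hd n ?_
    rw [eq_const_last_of_head_eq_last hq hqG hdrop hlast, piQ_const hq, Fin.val_last]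

lemma eq_one_add_div_of_mem_Uq {x : ℝ} (hq : 1 < q) (hx : 0 < x) (hqG : 1 + M / x ≤ qG M)
    (hxq : x ∈ Uq M q) : q = 1 + M / x := by
  obtain ⟨d, hd⟩ := hxq.exists
  rcases (hd ▸ piQ_le_max hq d).lt_or_eq with hlt | heq
  · have hq' : q < 1 + M / x := by
      rw [← sub_lt_iff_lt_add', lt_div_iff₀ hx]
      rwa [lt_div_iff₀ (by linarith), mul_comm] at hlt
    have := Uq_subset_of_lt_qG hq (hq'.trans_le hqG) hxq
    simp only [Set.mem_insert_iff, Set.mem_singleton_iff] at this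
    rcases this with h | h <;> linarith
  · have hM : (M : ℝ) ≠ 0 := fun hM => by simp [hM] at heq; linarith
    rw [heq, div_div_cancel₀ hM]
    ring

end BelowGoldenRatio

/-- For every `x ≥ x_G`, the set `𝒰(x)` is the singleton `{q_x}`. -/
theorem Ubases_singleton_of_xG_le (M : ℕ) (hM : 0 < M) (x : ℝ) (hx : xG M ≤ x) :
    Ubases M x = {qx M x} := by
  have hqG := one_lt_qG hM
  rw [xG, div_le_iff₀ (by linarith)] at hx
  have hx1 : 1 ≤ x := by nlinarith [qG_le M]
  have hMx : (M : ℝ) / x ≤ M := div_le_self (Nat.cast_nonneg M) hx1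
  have hqxG : 1 + M / x ≤ qG M := by
    rw [← le_sub_iff_add_le', div_le_iff₀ (by linarith)]
    linarith
  rw [qx, min_eq_right (by linarith)]
  ext q
  rw [Set.mem_singleton_iff]
  constructor
  · rintro ⟨⟨hq, -⟩, hxq⟩
    exact eq_one_add_div_of_mem_Uq hq (by linarith) hqxG hxq
  · rintro rfl
    have hM0 : (M : ℝ) ≠ 0 := Nat.cast_ne_zero.2 hM.ne'
    have hq : 1 < 1 + (M : ℝ) / x := lt_add_of_pos_right 1 (by positivity)
    refine ⟨⟨hq, by linarith⟩, ?_⟩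
    simpa [div_div_cancel₀ hM0] using max_mem_Uq (M := M) hq

end Expansions
end

section
/- Let (τ_i)_{i≥0} = 0110100110010110… be the Thue–Morse sequence over {0,1} (τ_i equals the parity of the number of 1's in the binary expansion of i). Then for every integer n ≥ 0: (i) the word τ_{2^n+1}…τ_{2^{n+1}} equals the bitwise complement of the word τ₁…τ_{2^n} with its last digit increased by 1; and (ii) for every integer i with 0 ≤ i < 2^n, the strict and non-strict lexicographic inequalities complement(τ₁…τ_{2^n−i}) ≺ τ_{i+1}…τ_{2^n} ≼ τ₁…τ_{2^n−i} hold, where complement(w) replaces each digit c of w by 1−c. -/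
open scoped ENNReal NNReal Classical

namespace Expansions

/-- The word `τ_a τ_{a+1} … τ_{a+len-1}`. -/
def tmWord (a len : ℕ) : List ℕ := List.ofFn (fun j : Fin len => tm (a + j))

/-- Bitwise complement of a word over `{0,1}`. -/
def wordCompl (w : List ℕ) : List ℕ := w.map (fun c => 1 - c)

/-- The word with its last digit increased by `1`. -/
def wordPlus (w : List ℕ) : List ℕ := w.dropLast ++ [w.getLastD 0 + 1]

/-!
The binary expansion of `2 ^ n + k` (for `k < 2 ^ n`) is that of `k` with one more digit `1`, so
`τ_{2^n+k} = 1 - τ_k`: the word `w' = τ₁…τ_{2^{n+1}}` is `w · (complement w)⁺` with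
`w = τ₁…τ_{2^n}`, which is (i). Part (ii) is proved for `w'` from the same statement for `w`.
A suffix of `w'` starting in its second half is a suffix of `(complement w)⁺`, and complementing
exchanges the two inequalities for the corresponding suffix of `w`; the final `⁺` turns equality
into strict inequality on one side and strict into weak on the other. A suffix starting in the
first half is controlled by the suffix of `w`, unless that suffix equals a prefix of `w`; then
the comparison continues into `(complement w)⁺`, where the strict left inequality for the suffix
of `w` of the complementary length decides it.
-/

theorem tm_le_one (i : ℕ) : tm i ≤ 1 := Nat.le_of_lt_succ (Nat.mod_lt _ two_pos)

theorem tm_two_pow_add {n k : ℕ} (hk : k < 2 ^ n) : tm (2 ^ n + k) = 1 - tm k := by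
  have hlen : (Nat.digits 2 k).length ≤ n := (Nat.digits_length_le_iff one_lt_two k).2 hk
  have hdigits := Nat.digits_append_zeroes_append_digits (b := 2)
    (k := n - (Nat.digits 2 k).length) (m := 1) (n := k) one_lt_two one_pos
  rw [Nat.add_sub_cancel' hlen, mul_one] at hdigits
  unfold tm
  rw [add_comm, ← hdigits]
  simp only [List.sum_append, List.sum_replicate, smul_zero, add_zero,
    Nat.digits_of_lt 2 1 one_ne_zero one_lt_two, List.sum_singleton]
  omega

theorem tm_two_pow (n : ℕ) : tm (2 ^ n) = 1 := by
  simpa [tm] using tm_two_pow_add (n := n) (k := 0) (Nat.two_pow_pos n)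

section LexOn

variable {α : Type*} [LT α]

def LexLtOn (L : ℕ) (f g : ℕ → α) : Prop := ∃ j < L, (∀ k < j, f k = g k) ∧ f j < g j

def LexLeOn (L : ℕ) (f g : ℕ → α) : Prop := (∀ k < L, f k = g k) ∨ LexLtOn L f g

theorem LexLtOn.mono {L L' : ℕ} {f g : ℕ → α} (h : LexLtOn L f g) (hL : L ≤ L') :
    LexLtOn L' f g :=
  let ⟨j, hj, heq, hlt⟩ := h
  ⟨j, hj.trans_le hL, heq, hlt⟩

theorem LexLtOn.congr_left {L : ℕ} {f f' g : ℕ → α} (h : LexLtOn L f g)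
    (hf : ∀ k < L, f k = f' k) : LexLtOn L f' g :=
  let ⟨j, hj, heq, hlt⟩ := h
  ⟨j, hj, fun k hk => (hf k (hk.trans hj)).symm.trans (heq k hk), hf j hj ▸ hlt⟩

theorem LexLtOn.add_of_eqOn {M L : ℕ} {f g : ℕ → α} (heq : ∀ k < M, f k = g k)
    (h : LexLtOn L (fun k => f (M + k)) (fun k => g (M + k))) : LexLtOn (M + L) f g := by
  obtain ⟨j, hj, hpre, hlt⟩ := h
  refine ⟨M + j, by omega, fun k hk => ?_, hlt⟩
  rcases lt_or_ge k M with hkM | hMk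
  · exact heq k hkM
  · simpa [Nat.add_sub_cancel' hMk] using hpre (k - M) (by omega)

theorem LexLtOn.ofFn_lt {L : ℕ} {f g : ℕ → α} (h : LexLtOn L f g) :
    List.ofFn (fun j : Fin L => f j) < List.ofFn (fun j : Fin L => g j) := by
  obtain ⟨j, hj, heq, hlt⟩ := h
  rw [List.lt_iff_exists]
  exact Or.inr ⟨j, by simpa, by simpa, fun k hk => by simpa using heq k hk, by simpa using hlt⟩

end LexOn

section ComplPlus

variable {L : ℕ} {f u t : ℕ → ℕ}

theorem lexLtOn_compl_of_lexLeOn (hf : ∀ k, f k ≤ 1) (hL : 0 < L)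
    (ht : ∀ k, k + 1 < L → t k = 1 - u k) (htL : t (L - 1) = 1) (hu : u (L - 1) = 1)
    (h : LexLeOn L u f) :
    LexLtOn L (fun k => 1 - f k) t := by
  rcases h with heq | ⟨j, hj, hpre, hlt⟩
  · refine ⟨L - 1, by omega, fun k hk => ?_, ?_⟩
    · rw [ht k (by omega), heq k (by omega)]
    · simp only [htL, ← heq _ (by omega : L - 1 < L), hu, tsub_self, zero_lt_one]
  · refine ⟨j, hj, fun k hk => ?_, ?_⟩
    · rw [ht k (by omega), hpre k hk]
    · rcases lt_or_eq_of_le (Nat.le_sub_one_of_lt hj) with hjL | rfl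
      · simp only [ht j (by omega)]
        have := hf j
        omega
      · simp only [htL]
        omega

theorem lexLeOn_of_lexLtOn_compl (hf : ∀ k, f k ≤ 1) (hu : ∀ k, u k ≤ 1)
    (ht : ∀ k, k + 1 < L → t k = 1 - u k) (htL : t (L - 1) = 1)
    (h : LexLtOn L (fun k => 1 - f k) u) : LexLeOn L t f := by
  obtain ⟨j, hj, hpre, hlt⟩ := h
  simp only at hpre hlt
  have hfj := hf j
  have huj := hu j
  have hpre' : ∀ k < j, t k = f k := fun k hk => by
    have := hf k
    rw [ht k (by omega), ← hpre k hk]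
    omega
  rcases lt_or_eq_of_le (Nat.le_sub_one_of_lt hj) with hjL | rfl
  · exact Or.inr ⟨j, hj, hpre', by rw [ht j (by omega)]; omega⟩
  · refine Or.inl fun k hk => ?_
    rcases lt_or_eq_of_le (Nat.le_sub_one_of_lt hk) with hkL | rfl
    · exact hpre' k hkL
    · omega

end ComplPlus

/-- Part (ii) for the word `s 0 … s (N - 1)`; for Thue–Morse, `s k = τ_{k+1}`. -/
def LexBoundedSuffixes (s : ℕ → ℕ) (N : ℕ) : Prop :=
  ∀ i < N, LexLtOn (N - i) (fun k => 1 - s k) (fun k => s (i + k)) ∧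
    LexLeOn (N - i) (fun k => s (i + k)) s

/-- The hypotheses say that `s 0 … s (2N - 1)` is `w · (complement w)⁺` for
`w = s 0 … s (N - 1)`, with `w` ending in `1`. -/
theorem LexBoundedSuffixes.double {s : ℕ → ℕ} {N : ℕ} (hs : ∀ k, s k ≤ 1)
    (hcompl : ∀ k, k + 1 < N → s (N + k) = 1 - s k) (hlast : s (N - 1) = 1)
    (hlast' : s (2 * N - 1) = 1) (h : LexBoundedSuffixes s N) :
    LexBoundedSuffixes s (2 * N) := by
  intro i hi
  rcases lt_or_ge i N with hiN | hNi
  · obtain ⟨habove, hbelow⟩ := h i hiN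
    refine ⟨habove.mono (by omega), ?_⟩
    rcases hbelow with heq | hlt
    · rcases Nat.eq_zero_or_pos i with rfl | hi0
      · exact Or.inl fun k _ => by simp only [zero_add]
      · have habove' := (h (N - i) (by omega)).1.congr_left
          (f' := fun k => s (i + ((N - i) + k))) fun k hk => by
            rw [← hcompl k (by omega)]
            congr 1
            omega
        have hlt' := LexLtOn.add_of_eqOn heq (by simpa [Nat.sub_sub_self hiN.le] using habove')
        exact Or.inr (hlt'.mono (by omega))
    · exact Or.inr (hlt.mono (by omega))
  · obtain ⟨i', rfl⟩ : ∃ i', i = N + i' := ⟨i - N, by omega⟩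
    obtain ⟨habove, hbelow⟩ := h i' (by omega)
    have ht : ∀ k, k + 1 < 2 * N - (N + i') → s (N + i' + k) = 1 - s (i' + k) := fun k hk => by
      rw [add_assoc, hcompl _ (by omega)]
    have htL : s (N + i' + (2 * N - (N + i') - 1)) = 1 := by
      rw [← hlast']
      congr 1
      omega
    have hLN : 2 * N - (N + i') = N - i' := by omega
    refine ⟨lexLtOn_compl_of_lexLeOn hs (by omega) ht htL ?_ (hLN ▸ hbelow),
      lexLeOn_of_lexLtOn_compl hs (fun k => hs _) ht htL (hLN ▸ habove)⟩
    rw [← hlast]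
    congr 1
    omega

theorem lexBoundedSuffixes_tm (n : ℕ) : LexBoundedSuffixes (fun k => tm (1 + k)) (2 ^ n) := by
  have htm_one : tm 1 = 1 := tm_two_pow 0
  induction n with
  | zero =>
    intro i hi
    obtain rfl : i = 0 := by simpa using hi
    exact ⟨⟨0, one_pos, nofun, by simp [htm_one]⟩, Or.inl fun _ _ => by simp⟩
  | succ n ih =>
    have hpos := Nat.one_le_two_pow (n := n)
    rw [pow_succ']
    refine ih.double (fun k => tm_le_one _) (fun k hk => ?_) ?_ ?_
    · rw [add_left_comm, tm_two_pow_add (by omega)]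
    · rw [Nat.add_sub_cancel' hpos, tm_two_pow]
    · rw [Nat.add_sub_cancel' (by omega), ← pow_succ', tm_two_pow]

theorem tmWord_succ (a L : ℕ) : tmWord a (L + 1) = tmWord a L ++ [tm (a + L)] := by
  simp only [tmWord, List.ofFn_succ', List.concat_eq_append, Fin.val_last, Fin.val_castSucc]

theorem tmWord_add_one (i L : ℕ) :
    tmWord (i + 1) L = List.ofFn fun j : Fin L => tm (1 + (i + j)) := by
  simp only [tmWord, add_comm i 1, add_assoc]

theorem wordCompl_tmWord (a L : ℕ) :
    wordCompl (tmWord a L) = List.ofFn fun j : Fin L => 1 - tm (a + j) := by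
  simp [wordCompl, tmWord, List.map_ofFn, Function.comp_def]

theorem wordPlus_append_singleton (w : List ℕ) (a : ℕ) :
    wordPlus (w ++ [a]) = w ++ [a + 1] := by
  simp [wordPlus]

theorem tmWord_two_pow_add_one (n : ℕ) :
    tmWord (2 ^ n + 1) (2 ^ n) = wordPlus (wordCompl (tmWord 1 (2 ^ n))) := by
  obtain ⟨m, hm⟩ : ∃ m, 2 ^ n = m + 1 := Nat.exists_eq_add_one.2 (Nat.two_pow_pos n)
  have hlast : tm (m + 1) = 1 := hm ▸ tm_two_pow n
  rw [hm, tmWord_succ, tmWord_succ, wordCompl, List.map_append, ← wordCompl,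
    List.map_singleton, wordPlus_append_singleton, wordCompl_tmWord, add_comm 1 m, hlast]
  congr 2
  · exact List.ofFn_inj.2 <| funext fun j => by
      rw [add_assoc, ← hm, tm_two_pow_add (by omega), add_comm]
  · rw [show m + 1 + 1 + m = 2 * (m + 1) by ring, ← hm, ← pow_succ', tm_two_pow]

/-- Lemma (Thue–Morse): for every `n ≥ 0`,
(i) `τ_{2^n+1}…τ_{2^{n+1}} = complement(τ₁…τ_{2^n})⁺`, and
(ii) for `0 ≤ i < 2^n`,
`complement(τ₁…τ_{2^n-i}) ≺ τ_{i+1}…τ_{2^n} ≼ τ₁…τ_{2^n-i}` lexicographically. -/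
theorem thueMorse_lex (n : ℕ) :
    tmWord (2 ^ n + 1) (2 ^ n) = wordPlus (wordCompl (tmWord 1 (2 ^ n))) ∧
    ∀ i < 2 ^ n,
      List.Lex (· < ·) (wordCompl (tmWord 1 (2 ^ n - i))) (tmWord (i + 1) (2 ^ n - i)) ∧
      (tmWord (i + 1) (2 ^ n - i) = tmWord 1 (2 ^ n - i) ∨
        List.Lex (· < ·) (tmWord (i + 1) (2 ^ n - i)) (tmWord 1 (2 ^ n - i))) := by
  refine ⟨tmWord_two_pow_add_one n, fun i hi => ?_⟩
  obtain ⟨habove, hbelow⟩ := lexBoundedSuffixes_tm n i hi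
  rw [wordCompl_tmWord, tmWord_add_one]
  exact ⟨habove.ofFn_lt,
    hbelow.imp (fun heq => List.ofFn_inj.2 (funext fun j => heq j j.isLt)) LexLtOn.ofFn_lt⟩

end Expansions
end
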